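/- Fix an integer r ≥ 2. In the ring ℤ[q, q^{−1}][y] of polynomials in y over Laurent polynomials in q, the following identity holds: Σ_{e=0}^{r−1} q^{e(e−1)/2} P_r(e) y^e = [r−1]_q · Σ_{j=1}^{r−1} q^{rj} ∏_{t=0}^{r−2} (q^{t−j} y + 1) + Σ_{j=1}^{r−2} q^{r²−1−rj} [ ∏_{t=0}^{r−2} (q^{t−r+j} y + 1) − q^{−(r−j+1)(r−j)/2} y^{r−j} ∏_{t=0}^{j−2} (q^t y + 1) ] + q^{r−1} ∏_{t=0}^{r−3} (q^t y + 1) + [r−1]_q · ∏_{t=0}^{r−2} (q^t y + 1). (This generating-function identity is the computational core of Theorem 1.2(1): it characterizes the polynomials P_r(e), which are the virtual Poincaré polynomials of the strata Gr_{e,1}(M(6)) of the quiver Grassmannian of the indecomposable rigid representation M(6) with dimension vector (r³−2r, r²−1) of the r-Kronecker quiver.) -/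

import Mathlib

/-- Gaussian binomial coefficient via the q-Pascal recursion. -/
def qPascal {R : Type*} [CommRing R] (q : R) : ℕ → ℕ → R
  | _, 0 => 1
  | 0, _ + 1 => 0
  | n + 1, k + 1 => qPascal q n k + q ^ (k + 1) * qPascal q n (k + 1)

/-- Gaussian binomial `[n choose k]_q` for integers `n`, `k`, evaluated at an element `q`
of a commutative ring; it is `0` when `k < 0` or `k > n`. -/
def qBinom {R : Type*} [CommRing R] (q : R) (n k : ℤ) : R :=
  if 0 ≤ k ∧ k ≤ n then qPascal q n.toNat k.toNat else 0

/-- `[m]_q = 1 + q + ⋯ + q^(m-1)`. -/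
def qNat {R : Type*} [CommRing R] (q : R) (m : ℕ) : R := ∑ i ∈ Finset.range m, q ^ i

/-- The ring `ℤ[q,q⁻¹][y]` of polynomials in `y` over Laurent polynomials in `q`. -/
abbrev LPoly : Type := Polynomial (LaurentPolynomial ℤ)

/-- The monomial `q^n` (`n ∈ ℤ`) viewed inside `ℤ[q,q⁻¹][y]`. -/
noncomputable def Qp (n : ℤ) : LPoly := Polynomial.C (LaurentPolynomial.T n)

/-- The element `q` of `ℤ[q,q⁻¹][y]`. -/
noncomputable def qq : LPoly := Qp 1

/-- The polynomial `P_r(e) = [r-1 choose 1]_q [r-1 choose e]_q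
+ ∑_{j=1}^{r-1} q^((r-e)j-1) ([r choose 1]_q [r-1 choose e]_q - [r-j-1 choose e-j]_q)`,
viewed in `ℤ[q,q⁻¹][y]`. -/
noncomputable def Ppoly (r e : ℕ) : LPoly :=
  qBinom qq ((r : ℤ) - 1) 1 * qBinom qq ((r : ℤ) - 1) (e : ℤ) +
    ∑ j ∈ Finset.Icc 1 (r - 1),
      Qp (((r : ℤ) - (e : ℤ)) * (j : ℤ) - 1) *
        (qBinom qq (r : ℤ) 1 * qBinom qq ((r : ℤ) - 1) (e : ℤ) -
          qBinom qq ((r : ℤ) - (j : ℤ) - 1) ((e : ℤ) - (j : ℤ)))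

open Finset Polynomial

lemma Qp_mul (a b : ℤ) : Qp a * Qp b = Qp (a + b) := by
  rw [Qp, Qp, Qp, ← Polynomial.C_mul, ← LaurentPolynomial.T_add]

lemma Qp_zero : Qp 0 = 1 := by
  simp [Qp, LaurentPolynomial.T_zero]

lemma qq_pow (k : ℕ) : qq ^ k = Qp k := by
  rw [qq, Qp, Qp, ← Polynomial.C_pow]
  norm_cast
  rw [LaurentPolynomial.T_pow, mul_one]

lemma qPascal_eq_zero {R : Type*} [CommRing R] (q : R) :
    ∀ n k, n < k → qPascal q n k = 0
  | 0, _ + 1, _ => rfl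
  | n + 1, k + 1, h => by
    rw [qPascal, qPascal_eq_zero q n k (by omega), qPascal_eq_zero q n (k+1) (by omega)]
    ring

lemma qPascal_zero_right {R : Type*} [CommRing R] (q : R) (n : ℕ) : qPascal q n 0 = 1 := by
  cases n <;> rfl

lemma qNat_succ {R : Type*} [CommRing R] (q : R) (n : ℕ) :
    qNat q (n + 1) = 1 + q * qNat q n := by
  simp only [qNat, Finset.sum_range_succ', pow_succ', Finset.mul_sum, pow_zero]
  ring

lemma qPascal_one {R : Type*} [CommRing R] (q : R) (n : ℕ) : qPascal q n 1 = qNat q n := by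
  induction n with
  | zero => simp [qPascal, qNat]
  | succ n ih => rw [qPascal, ih, qPascal_zero_right, qNat_succ, pow_one]

lemma qBinom_natCast {R : Type*} [CommRing R] (q : R) (n k : ℕ) :
    qBinom q (n : ℤ) (k : ℤ) = qPascal q n k := by
  unfold qBinom
  split_ifs with h
  · simp
  · rw [qPascal_eq_zero]
    omega

def tri : ℕ → ℕ
  | 0 => 0
  | n + 1 => tri n + n

lemma two_triZ (n : ℕ) : 2 * (tri n : ℤ) = (n : ℤ) * ((n : ℤ) - 1) := by
  induction n with
  | zero => simp [tri]
  | succ n ih => rw [tri]; push_cast; push_cast at ih; linear_combination ih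

lemma tri_eq (n : ℕ) : tri n = n * (n - 1) / 2 := by
  have h := two_triZ n
  cases n with
  | zero => simp [tri]
  | succ m =>
    have h2 : ((2 * tri (m+1) : ℕ) : ℤ) = (((m+1) * m : ℕ) : ℤ) := by
      push_cast at h ⊢; linear_combination h
    have h3 : 2 * tri (m+1) = (m+1) * m := by exact_mod_cast h2
    simp only [Nat.add_sub_cancel]
    omega

lemma tri_succ (n : ℕ) : tri (n + 1) = tri n + n := rfl

/-- q-binomial theorem. -/
lemma qbt (m : ℕ) (a : ℤ) :
    ∏ t ∈ Finset.range m, (Qp ((t : ℤ) + a) * Polynomial.X + 1) =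
      ∑ e ∈ Finset.range (m + 1),
        Qp (a * (e : ℤ) + (tri e : ℤ)) * qPascal qq m e * Polynomial.X ^ e := by
  induction m generalizing a with
  | zero => simp [qPascal_zero_right, tri, Qp_zero]
  | succ m ih =>
    rw [Finset.prod_range_succ']
    have h1 : ∏ t ∈ Finset.range m, (Qp (((t + 1 : ℕ) : ℤ) + a) * Polynomial.X + 1) =
        ∏ t ∈ Finset.range m, (Qp ((t : ℤ) + (a + 1)) * Polynomial.X + 1) := by
      apply Finset.prod_congr rfl
      intro t _
      congr 2
      push_cast; ring
    rw [h1, ih (a + 1), Nat.cast_zero, zero_add, mul_add, mul_one, Finset.sum_mul]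
    rw [Finset.sum_range_succ'
      (fun e => Qp (a * (e : ℤ) + (tri e : ℤ)) * qPascal qq (m + 1) e * Polynomial.X ^ e) (m + 1)]
    have hsplit : ∀ e ∈ Finset.range (m + 1),
        Qp (a * ((e + 1 : ℕ) : ℤ) + (tri (e + 1) : ℤ)) * qPascal qq (m + 1) (e + 1) *
            Polynomial.X ^ (e + 1) =
          Qp ((a + 1) * (e : ℤ) + (tri e : ℤ)) * qPascal qq m e * Polynomial.X ^ e *
              (Qp a * Polynomial.X) +
            Qp ((a + 1) * ((e + 1 : ℕ) : ℤ) + (tri (e + 1) : ℤ)) * qPascal qq m (e + 1) *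
              Polynomial.X ^ (e + 1) := by
      intro e _
      have hrec : qPascal qq (m + 1) (e + 1) =
          qPascal qq m e + Qp ((e : ℤ) + 1) * qPascal qq m (e + 1) := by
        rw [qPascal, qq_pow]; push_cast; ring
      rw [hrec]
      have q1 : Qp ((a + 1) * (e : ℤ) + (tri e : ℤ)) * Qp a
          = Qp (a * ((e : ℤ) + 1) + (tri (e + 1) : ℤ)) := by
        rw [Qp_mul]; congr 1; rw [tri_succ]; push_cast; ring
      have q2 : Qp (a * ((e : ℤ) + 1) + (tri (e + 1) : ℤ)) * Qp ((e : ℤ) + 1)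
          = Qp ((a + 1) * ((e : ℤ) + 1) + (tri (e + 1) : ℤ)) := by
        rw [Qp_mul]; congr 1; ring
      push_cast
      linear_combination (qPascal qq m e * Polynomial.X ^ (e + 1)) * q1.symm +
        (qPascal qq m (e + 1) * Polynomial.X ^ (e + 1)) * q2
    rw [Finset.sum_congr rfl hsplit, Finset.sum_add_distrib]
    have hA0 : Qp (a * ((0 : ℕ) : ℤ) + (tri 0 : ℤ)) * qPascal qq (m + 1) 0 * Polynomial.X ^ 0
        = Qp ((a + 1) * ((0 : ℕ) : ℤ) + (tri 0 : ℤ)) * qPascal qq m 0 * Polynomial.X ^ 0 := by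
      simp [qPascal_zero_right]
    have h3 := Finset.sum_range_succ'
      (fun e => Qp ((a + 1) * (e : ℤ) + (tri e : ℤ)) * qPascal qq m e * Polynomial.X ^ e) (m + 1)
    have h4 : ∑ e ∈ Finset.range (m + 2),
        Qp ((a + 1) * (e : ℤ) + (tri e : ℤ)) * qPascal qq m e * Polynomial.X ^ e
        = ∑ e ∈ Finset.range (m + 1),
        Qp ((a + 1) * (e : ℤ) + (tri e : ℤ)) * qPascal qq m e * Polynomial.X ^ e := by
      rw [Finset.sum_range_succ, qPascal_eq_zero qq m (m + 1) (by omega)]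
      ring
    rw [hA0]
    rw [add_assoc, ← h3, h4]

lemma sum_shift (F : ℕ → LPoly) (a b : ℕ) :
    ∑ e ∈ Finset.range b, (if a ≤ e then F (e - a) else 0) =
      ∑ i ∈ Finset.range (b - a), F i := by
  rw [← Finset.sum_filter]
  have h1 : (Finset.range b).filter (fun e => a ≤ e) = Finset.Ico a b := by
    ext x; simp [Finset.mem_Ico]; omega
  rw [h1, Finset.sum_Ico_eq_sum_range]
  simp

lemma sum_reflect (F : ℕ → LPoly) (a b r : ℕ) (ha : 1 ≤ a) (har : a ≤ r) (hb : b ≤ r) :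
    ∑ j ∈ Finset.Icc a b, F j = ∑ j ∈ Finset.Icc (r - b) (r - a), F (r - j) := by
  apply Finset.sum_nbij' (i := fun j => r - j) (j := fun j => r - j) <;>
    intro x hx <;> simp only [Finset.mem_Icc] at * <;> try omega
  rw [show r - (r - x) = x by omega]

lemma sum_Icc_split (F : ℕ → LPoly) (n : ℕ) (h : 1 ≤ n) :
    ∑ j ∈ Finset.Icc 1 n, F j = F 1 + ∑ j ∈ Finset.Icc 2 n, F j := by
  rw [show Finset.Icc 1 n = insert 1 (Finset.Icc 2 n) by
    ext x; simp [Finset.mem_Icc, Finset.mem_insert]; omega]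
  rw [Finset.sum_insert (by simp)]

lemma qBinom_subNat (r e : ℕ) (hr : 1 ≤ r) :
    qBinom qq ((r : ℤ) - 1) (e : ℤ) = qPascal qq (r - 1) e := by
  rw [show (r : ℤ) - 1 = ((r - 1 : ℕ) : ℤ) by push_cast; omega, qBinom_natCast]

lemma qBinom_r_one (r : ℕ) : qBinom qq (r : ℤ) 1 = qNat qq r := by
  rw [show (1 : ℤ) = ((1 : ℕ) : ℤ) by norm_num, qBinom_natCast, qPascal_one]

lemma qBinom_sub (r j e : ℕ) (hj1 : 1 ≤ j) (hj : j ≤ r) :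
    qBinom qq ((r : ℤ) - (j : ℤ) - 1) ((e : ℤ) - (j : ℤ)) =
      if j ≤ e ∧ e ≤ r - 1 then qPascal qq (r - 1 - j) (e - j) else 0 := by
  split_ifs with h
  · rw [show (r : ℤ) - j - 1 = ((r - 1 - j : ℕ) : ℤ) by push_cast; omega,
      show (e : ℤ) - j = ((e - j : ℕ) : ℤ) by push_cast; omega, qBinom_natCast]
  · rw [qBinom, if_neg]
    intro hc
    omega

lemma qbt0 (m : ℕ) :
    ∏ t ∈ Finset.range m, (Qp (t : ℤ) * Polynomial.X + 1) =
      ∑ e ∈ Finset.range (m + 1), Qp ((tri e : ℤ)) * qPascal qq m e * Polynomial.X ^ e := by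
  have h := qbt m 0
  simpa using h

lemma T1eq (s : ℕ) :
    qNat qq (s+1) * ∑ j ∈ Finset.Icc 1 (s+1), Qp (((s+2 : ℕ) : ℤ) * (j : ℤ)) *
        ∏ t ∈ Finset.range (s+1), (Qp ((t : ℤ) - (j : ℤ)) * Polynomial.X + 1)
    = ∑ e ∈ Finset.range (s+2), ∑ j ∈ Finset.Icc 1 (s+1),
        qNat qq (s+1) * (Qp (((s+2 : ℕ) : ℤ) * (j : ℤ)) *
          (Qp (-(j : ℤ) * (e : ℤ) + (tri e : ℤ)) * qPascal qq (s+1) e * Polynomial.X ^ e)) := by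
  rw [Finset.mul_sum]
  have hj : ∀ j ∈ Finset.Icc 1 (s+1),
      qNat qq (s+1) * (Qp (((s+2 : ℕ) : ℤ) * (j : ℤ)) *
        ∏ t ∈ Finset.range (s+1), (Qp ((t : ℤ) - (j : ℤ)) * Polynomial.X + 1))
      = ∑ e ∈ Finset.range (s+2), qNat qq (s+1) * (Qp (((s+2 : ℕ) : ℤ) * (j : ℤ)) *
          (Qp (-(j : ℤ) * (e : ℤ) + (tri e : ℤ)) * qPascal qq (s+1) e * Polynomial.X ^ e)) := by
    intro j _
    have hp : ∏ t ∈ Finset.range (s+1), (Qp ((t : ℤ) - (j : ℤ)) * Polynomial.X + 1)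
        = ∑ e ∈ Finset.range (s+2),
            Qp (-(j : ℤ) * (e : ℤ) + (tri e : ℤ)) * qPascal qq (s+1) e * Polynomial.X ^ e := by
      have h1 : ∏ t ∈ Finset.range (s+1), (Qp ((t : ℤ) - (j : ℤ)) * Polynomial.X + 1)
          = ∏ t ∈ Finset.range (s+1), (Qp ((t : ℤ) + -(j : ℤ)) * Polynomial.X + 1) :=
        Finset.prod_congr rfl fun t _ => by rw [sub_eq_add_neg]
      rw [h1, qbt]
    rw [hp, Finset.mul_sum, Finset.mul_sum]
  rw [Finset.sum_congr rfl hj, Finset.sum_comm]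

lemma T4eq (s : ℕ) :
    qNat qq (s+1) * ∏ t ∈ Finset.range (s+1), (Qp (t : ℤ) * Polynomial.X + 1)
    = ∑ e ∈ Finset.range (s+2),
        qNat qq (s+1) * (Qp ((tri e : ℤ)) * qPascal qq (s+1) e * Polynomial.X ^ e) := by
  rw [qbt0 (s+1), Finset.mul_sum]

lemma T3eq (s : ℕ) :
    Qp (((s+2 : ℕ) : ℤ) - 1) * ∏ t ∈ Finset.range s, (Qp (t : ℤ) * Polynomial.X + 1)
    = ∑ e ∈ Finset.range (s+2),
        Qp (((s+2 : ℕ) : ℤ) - 1) * (Qp ((tri e : ℤ)) * qPascal qq s e * Polynomial.X ^ e) := by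
  rw [qbt0 s, Finset.mul_sum]
  rw [show Finset.range (s+2) = Finset.range ((s+1)+1) from rfl]
  conv_rhs => rw [Finset.sum_range_succ]
  rw [qPascal_eq_zero qq s (s+1) (by omega)]
  ring

lemma T2eq (s : ℕ) :
    ∑ j ∈ Finset.Icc 1 s, Qp (((s+2 : ℕ) : ℤ)^2 - 1 - ((s+2 : ℕ) : ℤ) * (j : ℤ)) *
      (∏ t ∈ Finset.range (s+1),
          (Qp ((t : ℤ) - ((s+2 : ℕ) : ℤ) + (j : ℤ)) * Polynomial.X + 1) -
        Qp (-((((s+2 : ℕ) : ℤ) - (j : ℤ) + 1) * (((s+2 : ℕ) : ℤ) - (j : ℤ)) / 2)) *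
          Polynomial.X ^ (s+2-j) *
          ∏ t ∈ Finset.range (j-1), (Qp (t : ℤ) * Polynomial.X + 1))
    = ∑ e ∈ Finset.range (s+2), ∑ j ∈ Finset.Icc 1 s,
        (Qp (((s+2 : ℕ) : ℤ)^2 - 1 - ((s+2 : ℕ) : ℤ) * (j : ℤ)) *
          (Qp ((-((s+2 : ℕ) : ℤ) + (j : ℤ)) * (e : ℤ) + (tri e : ℤ)) *
            qPascal qq (s+1) e * Polynomial.X ^ e) -
        Qp (((s+2 : ℕ) : ℤ)^2 - 1 - ((s+2 : ℕ) : ℤ) * (j : ℤ)) *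
          (if s+2-j ≤ e then
            Qp (-((((s+2 : ℕ) : ℤ) - (j : ℤ) + 1) * (((s+2 : ℕ) : ℤ) - (j : ℤ)) / 2)) *
              (Qp ((tri (e - (s+2-j)) : ℤ)) * qPascal qq (j-1) (e - (s+2-j))) *
              Polynomial.X ^ ((s+2-j) + (e - (s+2-j)))
          else 0)) := by
  have hj : ∀ j ∈ Finset.Icc 1 s,
      Qp (((s+2 : ℕ) : ℤ)^2 - 1 - ((s+2 : ℕ) : ℤ) * (j : ℤ)) *
      (∏ t ∈ Finset.range (s+1),
          (Qp ((t : ℤ) - ((s+2 : ℕ) : ℤ) + (j : ℤ)) * Polynomial.X + 1) -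
        Qp (-((((s+2 : ℕ) : ℤ) - (j : ℤ) + 1) * (((s+2 : ℕ) : ℤ) - (j : ℤ)) / 2)) *
          Polynomial.X ^ (s+2-j) *
          ∏ t ∈ Finset.range (j-1), (Qp (t : ℤ) * Polynomial.X + 1))
      = ∑ e ∈ Finset.range (s+2),
        (Qp (((s+2 : ℕ) : ℤ)^2 - 1 - ((s+2 : ℕ) : ℤ) * (j : ℤ)) *
          (Qp ((-((s+2 : ℕ) : ℤ) + (j : ℤ)) * (e : ℤ) + (tri e : ℤ)) *
            qPascal qq (s+1) e * Polynomial.X ^ e) -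
        Qp (((s+2 : ℕ) : ℤ)^2 - 1 - ((s+2 : ℕ) : ℤ) * (j : ℤ)) *
          (if s+2-j ≤ e then
            Qp (-((((s+2 : ℕ) : ℤ) - (j : ℤ) + 1) * (((s+2 : ℕ) : ℤ) - (j : ℤ)) / 2)) *
              (Qp ((tri (e - (s+2-j)) : ℤ)) * qPascal qq (j-1) (e - (s+2-j))) *
              Polynomial.X ^ ((s+2-j) + (e - (s+2-j)))
          else 0)) := by
    intro j hjm
    rw [Finset.mem_Icc] at hjm
    have hp1 : ∏ t ∈ Finset.range (s+1),
        (Qp ((t : ℤ) - ((s+2 : ℕ) : ℤ) + (j : ℤ)) * Polynomial.X + 1)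
        = ∑ e ∈ Finset.range (s+2),
            Qp ((-((s+2 : ℕ) : ℤ) + (j : ℤ)) * (e : ℤ) + (tri e : ℤ)) *
              qPascal qq (s+1) e * Polynomial.X ^ e := by
      have h1 : ∏ t ∈ Finset.range (s+1),
          (Qp ((t : ℤ) - ((s+2 : ℕ) : ℤ) + (j : ℤ)) * Polynomial.X + 1)
          = ∏ t ∈ Finset.range (s+1),
            (Qp ((t : ℤ) + (-((s+2 : ℕ) : ℤ) + (j : ℤ))) * Polynomial.X + 1) :=
        Finset.prod_congr rfl fun t _ => by rw [sub_eq_add_neg, add_assoc]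
      rw [h1, qbt]
    have hp2 : Qp (-((((s+2 : ℕ) : ℤ) - (j : ℤ) + 1) * (((s+2 : ℕ) : ℤ) - (j : ℤ)) / 2)) *
          Polynomial.X ^ (s+2-j) *
          ∏ t ∈ Finset.range (j-1), (Qp (t : ℤ) * Polynomial.X + 1)
        = ∑ e ∈ Finset.range (s+2),
          (if s+2-j ≤ e then
            Qp (-((((s+2 : ℕ) : ℤ) - (j : ℤ) + 1) * (((s+2 : ℕ) : ℤ) - (j : ℤ)) / 2)) *
              (Qp ((tri (e - (s+2-j)) : ℤ)) * qPascal qq (j-1) (e - (s+2-j))) *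
              Polynomial.X ^ ((s+2-j) + (e - (s+2-j)))
          else 0) := by
      rw [qbt0 (j-1), show j-1+1 = j by omega, Finset.mul_sum]
      have hs := sum_shift (fun i =>
        Qp (-((((s+2 : ℕ) : ℤ) - (j : ℤ) + 1) * (((s+2 : ℕ) : ℤ) - (j : ℤ)) / 2)) *
          (Qp ((tri i : ℤ)) * qPascal qq (j-1) i) * Polynomial.X ^ ((s+2-j) + i))
        (s+2-j) (s+2)
      rw [show s+2 - (s+2-j) = j by omega] at hs
      refine Eq.trans (Finset.sum_congr rfl fun i _ => ?_) hs.symm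
      rw [pow_add]
      ring
    rw [hp1, hp2, ← Finset.sum_sub_distrib, Finset.mul_sum]
    apply Finset.sum_congr rfl
    intro e _
    rw [mul_sub]
  rw [Finset.sum_congr rfl hj, Finset.sum_comm]

lemma Pconv (s e : ℕ) (he : e ≤ s + 1) :
    Ppoly (s+2) e = qNat qq (s+1) * qPascal qq (s+1) e +
      ∑ j ∈ Finset.Icc 1 (s+1), Qp ((((s+2 : ℕ) : ℤ) - (e : ℤ)) * (j : ℤ) - 1) *
        ((1 + qq * qNat qq (s+1)) * qPascal qq (s+1) e -
          if j ≤ e then qPascal qq (s+1-j) (e-j) else 0) := by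
  rw [Ppoly]
  have hb1 : qBinom qq (((s+2 : ℕ) : ℤ) - 1) 1 = qNat qq (s+1) := by
    rw [show ((s+2 : ℕ) : ℤ) - 1 = ((s+1 : ℕ) : ℤ) by push_cast; ring,
      show (1 : ℤ) = ((1 : ℕ) : ℤ) by norm_num, qBinom_natCast, qPascal_one]
  have hbe : qBinom qq (((s+2 : ℕ) : ℤ) - 1) (e : ℤ) = qPascal qq (s+1) e := by
    rw [show ((s+2 : ℕ) : ℤ) - 1 = ((s+1 : ℕ) : ℤ) by push_cast; ring, qBinom_natCast]
  have hbr : qBinom qq ((s+2 : ℕ) : ℤ) 1 = 1 + qq * qNat qq (s+1) := by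
    rw [qBinom_r_one]
    exact qNat_succ qq (s+1)
  rw [hb1, hbe]
  refine congrArg (HAdd.hAdd _) ?_
  apply Finset.sum_congr (show Finset.Icc 1 (s+2-1) = Finset.Icc 1 (s+1) from rfl)
  intro j hj
  rw [Finset.mem_Icc] at hj
  rw [hbr, qBinom_sub (s+2) j e (by omega) (by omega)]
  congr 2
  simp only [show s+2-1 = s+1 from rfl, he, and_true]

lemma key (s e : ℕ) (he : e ≤ s + 1) :
    Qp ((tri e : ℤ)) * Ppoly (s+2) e * Polynomial.X ^ e =
      ∑ j ∈ Finset.Icc 1 (s+1),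
          qNat qq (s+1) * (Qp (((s+2 : ℕ) : ℤ) * (j : ℤ)) *
            (Qp (-(j : ℤ) * (e : ℤ) + (tri e : ℤ)) * qPascal qq (s+1) e * Polynomial.X ^ e)) +
        ∑ j ∈ Finset.Icc 1 s,
          (Qp (((s+2 : ℕ) : ℤ)^2 - 1 - ((s+2 : ℕ) : ℤ) * (j : ℤ)) *
            (Qp ((-((s+2 : ℕ) : ℤ) + (j : ℤ)) * (e : ℤ) + (tri e : ℤ)) *
              qPascal qq (s+1) e * Polynomial.X ^ e) -
          Qp (((s+2 : ℕ) : ℤ)^2 - 1 - ((s+2 : ℕ) : ℤ) * (j : ℤ)) *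
            (if s+2-j ≤ e then
              Qp (-((((s+2 : ℕ) : ℤ) - (j : ℤ) + 1) * (((s+2 : ℕ) : ℤ) - (j : ℤ)) / 2)) *
                (Qp ((tri (e - (s+2-j)) : ℤ)) * qPascal qq (j-1) (e - (s+2-j))) *
                Polynomial.X ^ ((s+2-j) + (e - (s+2-j)))
            else 0)) +
        Qp (((s+2 : ℕ) : ℤ) - 1) * (Qp ((tri e : ℤ)) * qPascal qq s e * Polynomial.X ^ e) +
        qNat qq (s+1) * (Qp ((tri e : ℤ)) * qPascal qq (s+1) e * Polynomial.X ^ e) := by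
  have hqq : qq = Qp 1 := rfl
  rw [Pconv s e he, mul_add, add_mul, Finset.mul_sum, Finset.sum_mul]
  have hsplit : ∀ j ∈ Finset.Icc 1 (s+1),
      Qp ((tri e : ℤ)) * (Qp ((((s+2 : ℕ) : ℤ) - (e : ℤ)) * (j : ℤ) - 1) *
        ((1 + qq * qNat qq (s+1)) * qPascal qq (s+1) e -
          if j ≤ e then qPascal qq (s+1-j) (e-j) else 0)) * Polynomial.X ^ e =
      (Qp ((tri e : ℤ)) * Qp ((((s+2 : ℕ) : ℤ) - (e : ℤ)) * (j : ℤ) - 1) *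
          qPascal qq (s+1) e * Polynomial.X ^ e +
        qNat qq (s+1) * (Qp ((tri e : ℤ)) * Qp ((((s+2 : ℕ) : ℤ) - (e : ℤ)) * (j : ℤ) - 1) *
          qq * qPascal qq (s+1) e * Polynomial.X ^ e)) -
      Qp ((tri e : ℤ)) * Qp ((((s+2 : ℕ) : ℤ) - (e : ℤ)) * (j : ℤ) - 1) *
        (if j ≤ e then qPascal qq (s+1-j) (e-j) else 0) * Polynomial.X ^ e := by
    intro j _
    ring
  rw [Finset.sum_congr rfl hsplit, Finset.sum_sub_distrib, Finset.sum_add_distrib,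
    Finset.sum_sub_distrib]
  have hv' : ∑ j ∈ Finset.Icc 1 (s+1),
      qNat qq (s+1) * (Qp ((tri e : ℤ)) * Qp ((((s+2 : ℕ) : ℤ) - (e : ℤ)) * (j : ℤ) - 1) *
        qq * qPascal qq (s+1) e * Polynomial.X ^ e)
      = ∑ j ∈ Finset.Icc 1 (s+1),
      qNat qq (s+1) * (Qp (((s+2 : ℕ) : ℤ) * (j : ℤ)) *
        (Qp (-(j : ℤ) * (e : ℤ) + (tri e : ℤ)) * qPascal qq (s+1) e * Polynomial.X ^ e)) := by
    apply Finset.sum_congr rfl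
    intro j _
    have h : Qp ((tri e : ℤ)) * Qp ((((s+2 : ℕ) : ℤ) - (e : ℤ)) * (j : ℤ) - 1) * qq
        = Qp (((s+2 : ℕ) : ℤ) * (j : ℤ)) * Qp (-(j : ℤ) * (e : ℤ) + (tri e : ℤ)) := by
      rw [hqq, Qp_mul, Qp_mul, Qp_mul]; congr 1; ring
    linear_combination (qNat qq (s+1) * qPascal qq (s+1) e * Polynomial.X ^ e) * h
  have hu := sum_Icc_split (fun x => Qp ((tri e : ℤ)) *
      Qp ((((s+2 : ℕ) : ℤ) - (e : ℤ)) * (x : ℤ) - 1) * qPascal qq (s+1) e * Polynomial.X ^ e)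
    (s+1) (by omega)
  have hw := sum_Icc_split (fun x => (Qp ((tri e : ℤ)) *
      Qp ((((s+2 : ℕ) : ℤ) - (e : ℤ)) * (x : ℤ) - 1) *
        if x ≤ e then qPascal qq (s+1-x) (e-x) else 0) * Polynomial.X ^ e)
    (s+1) (by omega)
  -- reflect the `a` sum
  have h1 := sum_reflect (fun x => Qp (((s+2 : ℕ) : ℤ)^2 - 1 - ((s+2 : ℕ) : ℤ) * (x : ℤ)) *
      (Qp ((-((s+2 : ℕ) : ℤ) + (x : ℤ)) * (e : ℤ) + (tri e : ℤ)) *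
        qPascal qq (s+1) e * Polynomial.X ^ e)) 1 s (s+2) (by omega) (by omega) (by omega)
  rw [show s+2-s = 2 by omega, show s+2-1 = s+1 from rfl] at h1
  have h2 : ∀ j ∈ Finset.Icc 2 (s+1),
      Qp (((s+2 : ℕ) : ℤ)^2 - 1 - ((s+2 : ℕ) : ℤ) * ((s+2-j : ℕ) : ℤ)) *
        (Qp ((-((s+2 : ℕ) : ℤ) + ((s+2-j : ℕ) : ℤ)) * (e : ℤ) + (tri e : ℤ)) *
          qPascal qq (s+1) e * Polynomial.X ^ e)
      = Qp ((tri e : ℤ)) * Qp ((((s+2 : ℕ) : ℤ) - (e : ℤ)) * (j : ℤ) - 1) *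
          qPascal qq (s+1) e * Polynomial.X ^ e := by
    intro j hj
    rw [Finset.mem_Icc] at hj
    rw [show ((s+2-j : ℕ) : ℤ) = ((s+2 : ℕ) : ℤ) - (j : ℤ) by omega]
    have h : Qp (((s+2 : ℕ) : ℤ)^2 - 1 - ((s+2 : ℕ) : ℤ) * (((s+2 : ℕ) : ℤ) - (j : ℤ))) *
        Qp ((-((s+2 : ℕ) : ℤ) + (((s+2 : ℕ) : ℤ) - (j : ℤ))) * (e : ℤ) + (tri e : ℤ))
        = Qp ((tri e : ℤ)) * Qp ((((s+2 : ℕ) : ℤ) - (e : ℤ)) * (j : ℤ) - 1) := by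
      rw [Qp_mul, Qp_mul]; congr 1; ring
    linear_combination (qPascal qq (s+1) e * Polynomial.X ^ e) * h
  have hra := h1.trans (Finset.sum_congr rfl h2)
  -- reflect the `b` sum
  have h3 := sum_reflect (fun x => Qp (((s+2 : ℕ) : ℤ)^2 - 1 - ((s+2 : ℕ) : ℤ) * (x : ℤ)) *
      (if s+2-x ≤ e then
        Qp (-((((s+2 : ℕ) : ℤ) - (x : ℤ) + 1) * (((s+2 : ℕ) : ℤ) - (x : ℤ)) / 2)) *
          (Qp ((tri (e - (s+2-x)) : ℤ)) * qPascal qq (x-1) (e - (s+2-x))) *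
          Polynomial.X ^ ((s+2-x) + (e - (s+2-x)))
      else 0)) 1 s (s+2) (by omega) (by omega) (by omega)
  rw [show s+2-s = 2 by omega, show s+2-1 = s+1 from rfl] at h3
  have h4 : ∀ j ∈ Finset.Icc 2 (s+1),
      Qp (((s+2 : ℕ) : ℤ)^2 - 1 - ((s+2 : ℕ) : ℤ) * ((s+2-j : ℕ) : ℤ)) *
        (if s+2-(s+2-j) ≤ e then
          Qp (-((((s+2 : ℕ) : ℤ) - ((s+2-j : ℕ) : ℤ) + 1) *
              (((s+2 : ℕ) : ℤ) - ((s+2-j : ℕ) : ℤ)) / 2)) *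
            (Qp ((tri (e - (s+2-(s+2-j))) : ℤ)) *
              qPascal qq ((s+2-j)-1) (e - (s+2-(s+2-j)))) *
            Polynomial.X ^ ((s+2-(s+2-j)) + (e - (s+2-(s+2-j))))
        else 0)
      = (Qp ((tri e : ℤ)) * Qp ((((s+2 : ℕ) : ℤ) - (e : ℤ)) * (j : ℤ) - 1) *
          if j ≤ e then qPascal qq (s+1-j) (e-j) else 0) * Polynomial.X ^ e := by
    intro j hj
    rw [Finset.mem_Icc] at hj
    rw [show s+2-(s+2-j) = j by omega, show (s+2-j)-1 = s+1-j by omega,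
      show ((s+2-j : ℕ) : ℤ) = ((s+2 : ℕ) : ℤ) - (j : ℤ) by omega]
    split_ifs with hje
    · rw [show j + (e - j) = e by omega,
        show ((s+2 : ℕ) : ℤ) - (((s+2 : ℕ) : ℤ) - (j : ℤ)) = (j : ℤ) from by ring]
      have hdvd : (2:ℤ) ∣ ((j : ℤ) + 1) * (j : ℤ) := by
        rcases Int.even_mul_succ_self (j : ℤ) with ⟨k, hk⟩
        exact ⟨k, by linarith⟩
      have hhalf : 2 * (((j : ℤ) + 1) * (j : ℤ) / 2) = ((j : ℤ) + 1) * (j : ℤ) :=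
        Int.mul_ediv_cancel' hdvd
      have ht1 : 2 * ((tri e : ℕ) : ℤ) = (e : ℤ) * ((e : ℤ) - 1) := two_triZ e
      have ht2 : 2 * ((tri (e-j) : ℕ) : ℤ) = ((e : ℤ) - (j : ℤ)) * ((e : ℤ) - (j : ℤ) - 1) := by
        have h0 := two_triZ (e-j)
        rw [show ((e-j : ℕ) : ℤ) = (e : ℤ) - (j : ℤ) by omega] at h0
        exact h0
      have hfuse : Qp (((s+2 : ℕ) : ℤ)^2 - 1 - ((s+2 : ℕ) : ℤ) * (((s+2 : ℕ) : ℤ) - (j : ℤ))) *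
          Qp (-(((j : ℤ) + 1) * (j : ℤ) / 2)) * Qp ((tri (e-j) : ℤ))
          = Qp ((tri e : ℤ)) * Qp ((((s+2 : ℕ) : ℤ) - (e : ℤ)) * (j : ℤ) - 1) := by
        rw [Qp_mul, Qp_mul, Qp_mul]; congr 1
        have h5 : 2 * (((s+2 : ℕ) : ℤ)^2 - 1 - ((s+2 : ℕ) : ℤ) * (((s+2 : ℕ) : ℤ) - (j : ℤ)) +
            -(((j : ℤ) + 1) * (j : ℤ) / 2) + ((tri (e-j) : ℕ) : ℤ))
            = 2 * (((tri e : ℕ) : ℤ) + ((((s+2 : ℕ) : ℤ) - (e : ℤ)) * (j : ℤ) - 1)) := by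
          linear_combination ht2 - ht1 - hhalf
        linarith
      linear_combination (qPascal qq (s+1-j) (e-j) * Polynomial.X ^ e) * hfuse
    · simp
  have hrb := h3.trans (Finset.sum_congr rfl h4)
  -- the Pascal step (j = 1 terms)
  have hp : Qp ((tri e : ℤ)) * Qp ((((s+2 : ℕ) : ℤ) - (e : ℤ)) * ((1 : ℕ) : ℤ) - 1) *
        qPascal qq (s+1) e * Polynomial.X ^ e -
      (Qp ((tri e : ℤ)) * Qp ((((s+2 : ℕ) : ℤ) - (e : ℤ)) * ((1 : ℕ) : ℤ) - 1) *
        if 1 ≤ e then qPascal qq (s+1-1) (e-1) else 0) * Polynomial.X ^ e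
      = Qp (((s+2 : ℕ) : ℤ) - 1) * (Qp ((tri e : ℤ)) * qPascal qq s e * Polynomial.X ^ e) := by
    rcases e with _ | e'
    · rw [if_neg (by omega)]
      have hf : Qp ((tri 0 : ℤ)) * Qp ((((s+2 : ℕ) : ℤ) - ((0 : ℕ) : ℤ)) * ((1 : ℕ) : ℤ) - 1)
          = Qp (((s+2 : ℕ) : ℤ) - 1) * Qp ((tri 0 : ℤ)) := by
        rw [Qp_mul, Qp_mul]; congr 1; push_cast; ring
      rw [qPascal_zero_right, qPascal_zero_right]
      linear_combination (Polynomial.X ^ (0:ℕ)) * hf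
    · rw [if_pos (by omega), show qPascal qq (s+1) (e'+1)
          = qPascal qq s e' + qq ^ (e'+1) * qPascal qq s (e'+1) from rfl,
        qq_pow, show s+1-1 = s from rfl, show e'+1-1 = e' from rfl]
      have hf : Qp ((tri (e'+1) : ℤ)) *
            Qp ((((s+2 : ℕ) : ℤ) - ((e'+1 : ℕ) : ℤ)) * ((1 : ℕ) : ℤ) - 1) *
            Qp (((e'+1 : ℕ) : ℤ))
          = Qp (((s+2 : ℕ) : ℤ) - 1) * Qp ((tri (e'+1) : ℤ)) := by
        rw [Qp_mul, Qp_mul, Qp_mul]; congr 1; push_cast; ring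
      linear_combination (qPascal qq s (e'+1) * Polynomial.X ^ (e'+1)) * hf
  linear_combination hu + hv' - hw - hra + hrb + hp

/-- The generating-function identity at the core of Theorem 1.2(1):
`∑_{e=0}^{r-1} q^(e(e-1)/2) P_r(e) y^e
  = [r-1]_q ∑_{j=1}^{r-1} q^(rj) ∏_{t=0}^{r-2} (q^(t-j) y + 1)
  + ∑_{j=1}^{r-2} q^(r²-1-rj) (∏_{t=0}^{r-2} (q^(t-r+j) y + 1)
      - q^(-(r-j+1)(r-j)/2) y^(r-j) ∏_{t=0}^{j-2} (q^t y + 1))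
  + q^(r-1) ∏_{t=0}^{r-3} (q^t y + 1) + [r-1]_q ∏_{t=0}^{r-2} (q^t y + 1)`. -/
theorem stmt16 (r : ℕ) (hr : 2 ≤ r) :
    ∑ e ∈ Finset.range r,
        Qp ((e * (e - 1) / 2 : ℕ) : ℤ) * Ppoly r e * Polynomial.X ^ e =
      qNat qq (r - 1) *
          ∑ j ∈ Finset.Icc 1 (r - 1), Qp ((r : ℤ) * (j : ℤ)) *
            ∏ t ∈ Finset.range (r - 1), (Qp ((t : ℤ) - (j : ℤ)) * Polynomial.X + 1) +
        ∑ j ∈ Finset.Icc 1 (r - 2), Qp ((r : ℤ) ^ 2 - 1 - (r : ℤ) * (j : ℤ)) *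
          (∏ t ∈ Finset.range (r - 1),
              (Qp ((t : ℤ) - (r : ℤ) + (j : ℤ)) * Polynomial.X + 1) -
            Qp (-(((r : ℤ) - (j : ℤ) + 1) * ((r : ℤ) - (j : ℤ)) / 2)) *
              Polynomial.X ^ (r - j) *
              ∏ t ∈ Finset.range (j - 1), (Qp (t : ℤ) * Polynomial.X + 1)) +
        Qp ((r : ℤ) - 1) * ∏ t ∈ Finset.range (r - 2), (Qp (t : ℤ) * Polynomial.X + 1) +
        qNat qq (r - 1) * ∏ t ∈ Finset.range (r - 1), (Qp (t : ℤ) * Polynomial.X + 1) := by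
  
  obtain ⟨s, rfl⟩ : ∃ s, r = s + 2 := ⟨r - 2, by omega⟩
  simp only [show s+2-1 = s+1 from rfl, show s+2-2 = s from rfl]
  rw [T1eq s, T2eq s, T3eq s, T4eq s, ← Finset.sum_add_distrib, ← Finset.sum_add_distrib,
    ← Finset.sum_add_distrib]
  apply Finset.sum_congr rfl
  intro e hemem
  rw [Finset.mem_range] at hemem
  rw [show ((e * (e - 1) / 2 : ℕ) : ℤ) = ((tri e : ℕ) : ℤ) by rw [tri_eq]]
  exact key s e (by omega)
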